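/- For each pattern p ∈ {213, 231, 312} and all n ≥ 1 and k, the number of permutations of [n] consisting of a single cycle with exactly k cyclic occurrences of the consecutive pattern p equals the number of permutations of [n−1] whose one-line notation has exactly k occurrences of p in consecutive positions. -/

import Mathlib

open scoped Classical

noncomputable section

/-- `x` is the minimal element of its cycle under `π`. -/
def isCycMin {n : ℕ} (π : Equiv.Perm (Fin n)) (x : Fin n) : Prop :=
  ∀ y : Fin n, π.SameCycle x y → x ≤ y

/-- The minimal elements of the cycles of `π`, listed in decreasing order. -/
def cycMins {n : ℕ} (π : Equiv.Perm (Fin n)) : List (Fin n) :=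
  ((List.finRange n).filter fun x => decide (isCycMin π x)).reverse

/-- The number of elements in the cycle of `x` under `π` (a fixed point has cycle length 1). -/
def cycLen {n : ℕ} (π : Equiv.Perm (Fin n)) (x : Fin n) : ℕ :=
  Nat.card {y : Fin n // π.SameCycle x y}

/-- The cycle of `x` under `π`, written as the list `x, π x, π² x, …`. -/
def seg {n : ℕ} (π : Equiv.Perm (Fin n)) (x : Fin n) : List (Fin n) :=
  (List.range (cycLen π x)).map fun j => (π ^ j) x

/-- `Ψ(π)`: the word obtained by erasing the parentheses from the standard cycle form of `π`
(each cycle starts with its smallest element; cycles are in decreasing order of their minima). -/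
def psiList {n : ℕ} (π : Equiv.Perm (Fin n)) : List (Fin n) :=
  (cycMins π).foldr (fun m acc => seg π m ++ acc) []

/-- The word `Ψ(π)` as a function `ℕ → ℕ` (positions and values both 0-indexed). -/
def wordN {n : ℕ} (π : Equiv.Perm (Fin n)) (i : ℕ) : ℕ :=
  ((psiList π).map fun x => (x : ℕ)).getD i 0

/-- Positions `i` and `j` of the word `Ψ(π)` hold elements lying in the same cycle of `π`. -/
def sameCycleAt {n : ℕ} (π : Equiv.Perm (Fin n)) (i j : ℕ) : Prop :=
  ∃ a b : Fin n, (psiList π)[i]? = some a ∧ (psiList π)[j]? = some b ∧ π.SameCycle a b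

/-- The number of cycles of `π`, fixed points included. -/
def cyc {n : ℕ} (π : Equiv.Perm (Fin n)) : ℕ :=
  Nat.card {x : Fin n // isCycMin π x}

/-- The number of cyclic occurrences of the length-3 consecutive pattern described by `P`
in `π`: positions `i, i+1, i+2` of `Ψ(π)` whose values satisfy `P` and which all lie in the
same cycle of `π`. -/
def consecC {n : ℕ} (π : Equiv.Perm (Fin n)) (P : ℕ → ℕ → ℕ → Prop) : ℕ :=
  Nat.card {i : ℕ // i + 2 < n ∧ P (wordN π i) (wordN π (i + 1)) (wordN π (i + 2)) ∧
    sameCycleAt π i (i + 1) ∧ sameCycleAt π (i + 1) (i + 2)}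

/-- The number of positions `i` so that `w i, w (i+1), w (i+2)` (all positions `< m`)
satisfy `P`. -/
def consecLine (m : ℕ) (w : ℕ → ℕ) (P : ℕ → ℕ → ℕ → Prop) : ℕ :=
  Nat.card {i : ℕ // i + 2 < m ∧ P (w i) (w (i + 1)) (w (i + 2))}

/-- The one-line notation of a permutation `σ` of `[m]`, as a function `ℕ → ℕ`
(0-indexed positions and values). -/
def oneLine {m : ℕ} (σ : Equiv.Perm (Fin m)) (i : ℕ) : ℕ :=
  if h : i < m then (σ ⟨i, h⟩ : ℕ) else 0

/-!
A one-cycle permutation `π` of `{0, …, m}` has standard cycle form `(0 π0 π²0 … πᵐ0)`, so `Ψ(π)`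
is `0` followed by a word in `1, …, m`; subtracting `1` from that word gives the one-line notation
of a permutation `σ` of `{0, …, m - 1}`. Every `σ` arises from exactly one `π`, namely the
rotation `i ↦ i + 1` relabelled by `σ` extended to fix `0`. All letters of `Ψ(π)` lie in one
cycle, the leading `0` cannot start an occurrence of `213`, `231` or `312` (none of them starts
with its smallest letter), and subtracting `1` preserves patterns, so occurrences at position
`i + 1` in `Ψ(π)` correspond to occurrences at position `i` in `σ`.
-/

open Equiv Equiv.Perm

lemma Nat.card_subtype_add_one {Q : ℕ → Prop} (h0 : ¬ Q 0) :
    Nat.card {i // Q (i + 1)} = Nat.card {i // Q i} := by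
  refine Nat.card_eq_of_bijective (fun i => ⟨i.1 + 1, i.2⟩)
    ⟨fun i j h => Subtype.ext (by simpa using congrArg Subtype.val h), ?_⟩
  rintro ⟨_ | i, hi⟩
  · exact (h0 hi).elim
  · exact ⟨⟨i, hi⟩, rfl⟩

lemma Equiv.Perm.decomposeFin_symm_zero_snd {m : ℕ} {g : Perm (Fin (m + 1))} (hg : g 0 = 0) :
    decomposeFin.symm (0, (decomposeFin g).2) = g := by
  have hfst : (decomposeFin g).1 = 0 :=
    calc (decomposeFin g).1 = decomposeFin.symm (decomposeFin g) 0 :=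
          (decomposeFin_symm_apply_zero _ _).symm
      _ = 0 := by rw [symm_apply_apply, hg]
  rw [← hfst, Prod.mk.eta, symm_apply_apply]

lemma exists_isCycMin_sameCycle {n : ℕ} (π : Perm (Fin n)) (x : Fin n) :
    ∃ z, π.SameCycle x z ∧ isCycMin π z := by
  obtain ⟨z, hz, hmin⟩ :=
    (Finset.univ.filter (π.SameCycle x)).exists_min_image id ⟨x, by simp [SameCycle.rfl]⟩
  simp only [Finset.mem_filter, Finset.mem_univ, true_and, id] at hz hmin
  exact ⟨z, hz, fun y hy => hmin y (hz.trans hy)⟩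

section FullCycle

variable {m : ℕ} {π : Perm (Fin (m + 1))}

lemma isCycMin_iff_eq_zero (hπ : π.IsCycleOn Set.univ) (x : Fin (m + 1)) :
    isCycMin π x ↔ x = 0 :=
  ⟨fun h => le_antisymm (h 0 (hπ.2 trivial trivial)) (Fin.zero_le x),
    by rintro rfl y -; exact Fin.zero_le y⟩

lemma cyc_eq_one_iff : cyc π = 1 ↔ π.IsCycleOn Set.univ := by
  refine ⟨fun h => ⟨Set.bijOn_univ.2 π.bijective, fun x _ y _ => ?_⟩, fun hπ => ?_⟩
  · obtain ⟨a, hxa, ha⟩ := exists_isCycMin_sameCycle π x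
    obtain ⟨b, hyb, hb⟩ := exists_isCycMin_sameCycle π y
    have hab : (⟨a, ha⟩ : {z // isCycMin π z}) = ⟨b, hb⟩ :=
      (Nat.card_eq_one_iff_unique.1 h).1.elim _ _
    rw [Subtype.mk.injEq] at hab
    exact hxa.trans (hab ▸ hyb.symm)
  · rw [cyc, Nat.card_congr (Equiv.subtypeEquivRight (isCycMin_iff_eq_zero hπ))]
    exact Nat.card_unique

lemma cycMins_eq_singleton_zero (hπ : π.IsCycleOn Set.univ) : cycMins π = [0] := by
  simp [cycMins, isCycMin_iff_eq_zero hπ, List.finRange_succ]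

lemma cycLen_zero_eq (hπ : π.IsCycleOn Set.univ) : cycLen π 0 = m + 1 := by
  simp [cycLen, hπ.2 (Set.mem_univ 0)]

lemma psiList_eq_map_pow_apply_zero (hπ : π.IsCycleOn Set.univ) :
    psiList π = (List.range (m + 1)).map fun j => (π ^ j) 0 := by
  simp [psiList, seg, cycMins_eq_singleton_zero hπ, cycLen_zero_eq hπ]

lemma wordN_eq_pow_apply_zero (hπ : π.IsCycleOn Set.univ) {i : ℕ} (hi : i < m + 1) :
    wordN π i = ((π ^ i) 0 : ℕ) := by
  simp [wordN, ← List.map_eq_flatMap, psiList_eq_map_pow_apply_zero hπ, hi]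

lemma sameCycleAt_of_isCycleOn (hπ : π.IsCycleOn Set.univ) {i j : ℕ} (hi : i < m + 1)
    (hj : j < m + 1) : sameCycleAt π i j :=
  ⟨(π ^ i) 0, (π ^ j) 0, by simp [psiList_eq_map_pow_apply_zero hπ, hi],
    by simp [psiList_eq_map_pow_apply_zero hπ, hj], hπ.2 trivial trivial⟩

end FullCycle

section CycleOfOneLine

variable {m : ℕ}

/-- The cycle `(0, σ 0 + 1, …, σ (m - 1) + 1)`. -/
def cycleOfOneLine (σ : Perm (Fin m)) : Perm (Fin (m + 1)) :=
  decomposeFin.symm (0, σ) * finRotate (m + 1) * (decomposeFin.symm (0, σ))⁻¹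

lemma cycleOfOneLine_pow_apply_zero (σ : Perm (Fin m)) (j : Fin (m + 1)) :
    (cycleOfOneLine σ ^ (j : ℕ)) 0 = decomposeFin.symm (0, σ) j := by
  conv_lhs => rw [← decomposeFin_symm_apply_zero 0 σ]
  rw [cycleOfOneLine, conj_pow, mul_apply, mul_apply, Perm.inv_def, symm_apply_apply, coe_pow,
    ← finCycle_eq_finRotate_iterate, finCycle_apply, zero_add]

lemma cycleOfOneLine_pow_succ_apply_zero (σ : Perm (Fin m)) (i : Fin m) :
    (cycleOfOneLine σ ^ ((i : ℕ) + 1)) 0 = (σ i).succ := by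
  simpa using cycleOfOneLine_pow_apply_zero σ i.succ

lemma isCycleOn_cycleOfOneLine (σ : Perm (Fin m)) :
    (cycleOfOneLine σ).IsCycleOn Set.univ := by
  have hreach : ∀ y, (cycleOfOneLine σ).SameCycle 0 y := fun y =>
    ⟨(((decomposeFin.symm (0, σ))⁻¹ y : Fin (m + 1)) : ℕ), by
      rw [zpow_natCast, cycleOfOneLine_pow_apply_zero, Perm.inv_def, apply_symm_apply]⟩
  exact ⟨Set.bijOn_univ.2 (cycleOfOneLine σ).bijective,
    fun x _ y _ => (hreach x).symm.trans (hreach y)⟩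

lemma cycleOfOneLine_injective : Function.Injective (cycleOfOneLine (m := m)) := by
  intro σ τ h
  ext i
  have hi := cycleOfOneLine_pow_succ_apply_zero σ i
  rw [h, cycleOfOneLine_pow_succ_apply_zero] at hi
  rw [Fin.succ_inj.1 hi.symm]

lemma exists_cycleOfOneLine_eq {π : Perm (Fin (m + 1))} (hπ : π.IsCycleOn Set.univ) :
    ∃ σ, cycleOfOneLine σ = π := by
  have hπ' : π.IsCycleOn (Finset.univ : Finset (Fin (m + 1))) := by simpa using hπ
  have hmod := fun {i j : ℕ} => hπ'.pow_apply_eq_pow_apply (Finset.mem_univ 0) (m := i) (n := j)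
  rw [Finset.card_univ, Fintype.card_fin] at hmod
  have hinj : Function.Injective fun j : Fin (m + 1) => (π ^ (j : ℕ)) 0 := fun i j h =>
    Fin.ext ((hmod.1 h).eq_of_lt_of_lt i.2 j.2)
  -- `g` lists the cycle of `π` from `0`, so `π` is `finRotate` relabelled by `g`
  set g := Equiv.ofBijective _ (Finite.injective_iff_bijective.1 hinj)
  refine ⟨(decomposeFin g).2, ?_⟩
  rw [cycleOfOneLine, decomposeFin_symm_zero_snd (by simp [g]), mul_inv_eq_iff_eq_mul]
  refine Equiv.ext fun j => ?_
  rw [mul_apply, mul_apply, ofBijective_apply, ofBijective_apply, ← mul_apply, ← pow_succ',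
    hmod, finRotate_apply, Fin.val_add, Fin.val_one']
  exact (Nat.mod_modEq _ _).trans ((Nat.mod_modEq _ _).add_left _)

def cycleOfOneLineEquiv (m : ℕ) : Perm (Fin m) ≃ {π : Perm (Fin (m + 1)) // cyc π = 1} :=
  Equiv.ofBijective (fun σ => ⟨cycleOfOneLine σ, cyc_eq_one_iff.2 (isCycleOn_cycleOfOneLine σ)⟩)
    ⟨fun _ _ h => cycleOfOneLine_injective (congrArg Subtype.val h),
      fun π => (exists_cycleOfOneLine_eq (cyc_eq_one_iff.1 π.2)).imp fun _ => Subtype.ext⟩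

lemma wordN_cycleOfOneLine_zero (σ : Perm (Fin m)) : wordN (cycleOfOneLine σ) 0 = 0 := by
  simpa using wordN_eq_pow_apply_zero (isCycleOn_cycleOfOneLine σ) (Nat.succ_pos m)

lemma wordN_cycleOfOneLine_add_one (σ : Perm (Fin m)) {i : ℕ} (hi : i < m) :
    wordN (cycleOfOneLine σ) (i + 1) = oneLine σ i + 1 := by
  rw [wordN_eq_pow_apply_zero (isCycleOn_cycleOfOneLine σ) (by omega),
    cycleOfOneLine_pow_succ_apply_zero σ ⟨i, hi⟩]
  simp [oneLine, hi]

lemma consecC_cycleOfOneLine (P : ℕ → ℕ → ℕ → Prop) (h0 : ∀ b c, ¬ P 0 b c)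
    (hsucc : ∀ a b c, P (a + 1) (b + 1) (c + 1) ↔ P a b c) (σ : Perm (Fin m)) :
    consecC (cycleOfOneLine σ) P = consecLine m (oneLine σ) P := by
  have hπ := isCycleOn_cycleOfOneLine σ
  have hP {i : ℕ} (hi : i + 2 < m) : P (wordN (cycleOfOneLine σ) (i + 1))
      (wordN (cycleOfOneLine σ) (i + 1 + 1)) (wordN (cycleOfOneLine σ) (i + 1 + 2)) ↔
      P (oneLine σ i) (oneLine σ (i + 1)) (oneLine σ (i + 2)) := by
    rw [show i + 1 + 2 = i + 2 + 1 by omega, wordN_cycleOfOneLine_add_one σ (by omega),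
      wordN_cycleOfOneLine_add_one σ (by omega), wordN_cycleOfOneLine_add_one σ hi, hsucc]
  rw [consecC, consecLine,
    ← Nat.card_subtype_add_one (by simp [wordN_cycleOfOneLine_zero, h0])]
  refine Nat.card_congr (Equiv.subtypeEquivRight fun i => ⟨?_, ?_⟩)
  · rintro ⟨hi, hword, -⟩
    exact ⟨by omega, (hP (by omega)).1 hword⟩
  · rintro ⟨hi, hline⟩
    exact ⟨by omega, (hP hi).2 hline, sameCycleAt_of_isCycleOn hπ (by omega) (by omega),
      sameCycleAt_of_isCycleOn hπ (by omega) (by omega)⟩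

lemma card_cyc_eq_one_consecC_eq (P : ℕ → ℕ → ℕ → Prop) (h0 : ∀ b c, ¬ P 0 b c)
    (hsucc : ∀ a b c, P (a + 1) (b + 1) (c + 1) ↔ P a b c) (k : ℕ) :
    Nat.card {π : Perm (Fin (m + 1)) // cyc π = 1 ∧ consecC π P = k}
      = Nat.card {σ : Perm (Fin m) // consecLine m (oneLine σ) P = k} := by
  rw [← Nat.card_congr (Equiv.subtypeSubtypeEquivSubtypeInter _ _)]
  exact Nat.card_congr ((cycleOfOneLineEquiv m).subtypeEquiv fun σ => by
    rw [← consecC_cycleOfOneLine P h0 hsucc σ]; rfl).symm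

end CycleOfOneLine

/-- For each `p ∈ {213, 231, 312}`: the number of single-cycle permutations of `[n]` with
`k` cyclic occurrences of the consecutive pattern `p` equals the number of permutations of
`[n-1]` with `k` occurrences of `p` in consecutive positions of their one-line notation. -/
theorem single_cycle_consec_patterns (n : ℕ) (hn : 1 ≤ n) (k : ℕ) :
    (Nat.card {π : Equiv.Perm (Fin n) //
        cyc π = 1 ∧ consecC π (fun a b c => b < a ∧ a < c) = k}
      = Nat.card {σ : Equiv.Perm (Fin (n - 1)) //
          consecLine (n - 1) (oneLine σ) (fun a b c => b < a ∧ a < c) = k}) ∧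
    (Nat.card {π : Equiv.Perm (Fin n) //
        cyc π = 1 ∧ consecC π (fun a b c => c < a ∧ a < b) = k}
      = Nat.card {σ : Equiv.Perm (Fin (n - 1)) //
          consecLine (n - 1) (oneLine σ) (fun a b c => c < a ∧ a < b) = k}) ∧
    (Nat.card {π : Equiv.Perm (Fin n) //
        cyc π = 1 ∧ consecC π (fun a b c => b < c ∧ c < a) = k}
      = Nat.card {σ : Equiv.Perm (Fin (n - 1)) //
          consecLine (n - 1) (oneLine σ) (fun a b c => b < c ∧ c < a) = k}) := by
  obtain ⟨m, rfl⟩ : ∃ m, n = m + 1 := ⟨n - 1, by omega⟩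
  refine ⟨card_cyc_eq_one_consecC_eq _ ?_ ?_ k, card_cyc_eq_one_consecC_eq _ ?_ ?_ k,
    card_cyc_eq_one_consecC_eq _ ?_ ?_ k⟩ <;> intros <;> omega
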